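/- arXiv:1410.4820 — 8 statements merged into one kernel-verified Lean document; each statement's English description precedes it below -/
import Mathlib

section
/- For the binomial-type stationary distribution π^V(x_A, x_B) = (1/Z^V) · C(VM, x_A) · (κ₂/(κ₁+κ₂))^{x_A} · (κ₁/(κ₁+κ₂))^{x_B} with normalizing constant Z^V = 1 − (κ₁/(κ₁+κ₂))^{VM}, if x̃^V = (x̃_A^V, x̃_B^V) ∈ (1/V)·Γ^V satisfies x̃^V → x̃ ∈ ℝ²_{>0} as V → ∞ (along a sequence with VM ∈ ℤ), then −(1/V)·ln(π^V(V·x̃^V)) converges to x̃_A(ln x̃_A − ln(κ₂/(κ₁+κ₂))) + x̃_B(ln x̃_B − ln(κ₁/(κ₁+κ₂))) − M ln M. -/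
/-!
Stirling's formula in the form `log n! = n log n - n + o(n)` gives
`(log m! - m log V) / V → x log x - x` whenever `m / V → x > 0`. Applied to `N = xA + xB`, `xA`
and `xB`, the linear terms cancel (as `M = x̃A + x̃B`), so `log C(N, xA) / V` tends to the
entropy `M log M - x̃A log x̃A - x̃B log x̃B`. The normalising constant tends to `1` and does not
contribute at scale `V`.
-/

open Filter Real Topology Asymptotics
open scoped Nat

theorem isLittleO_log_factorial_sub :
    (fun n : ℕ => log (n ! : ℝ) - (n * log n - n)) =o[atTop] (fun n => (n : ℝ)) := by
  have hseq : (fun n : ℕ => log (Stirling.stirlingSeq n)) =o[atTop] (fun n => (n : ℝ)) :=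
    ((Stirling.tendsto_stirlingSeq_sqrt_pi.log (by positivity)).isBigO_one ℝ).trans_isLittleO
      (isLittleO_one_left_iff ℝ |>.2 <| tendsto_norm_atTop_atTop.comp tendsto_natCast_atTop_atTop)
  have hlog : (fun n : ℕ => log (2 * n)) =o[atTop] (fun n => (n : ℝ)) := by
    have h2 : Tendsto (fun n : ℕ => 2 * (n : ℝ)) atTop atTop :=
      tendsto_natCast_atTop_atTop.const_mul_atTop two_pos
    exact (isLittleO_log_id_atTop.comp_tendsto h2).trans_isBigO
      (isBigO_const_mul_self 2 _ _)
  refine (hseq.add (hlog.const_mul_left (1 / 2))).congr_left fun n => ?_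
  rcases eq_or_ne n 0 with rfl | hn
  · simp [Stirling.stirlingSeq]
  rw [Stirling.log_stirlingSeq_formula, log_div (by positivity) (exp_ne_zero 1), log_exp]
  ring

theorem tendsto_log_factorial_sub_mul_log_div {V : ℕ → ℝ} {m : ℕ → ℕ} {x : ℝ}
    (hV : Tendsto V atTop atTop) (hx : 0 < x)
    (hm : Tendsto (fun n => (m n : ℝ) / V n) atTop (𝓝 x)) :
    Tendsto (fun n => (log (m n)! - m n * log (V n)) / V n) atTop (𝓝 (x * log x - x)) := by
  have hVpos := hV.eventually_gt_atTop 0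
  have hmtop : Tendsto (fun n => (m n : ℝ)) atTop atTop :=
    (hm.pos_mul_atTop hx hV).congr' <| by
      filter_upwards [hVpos] with n hn using div_mul_cancel₀ _ hn.ne'
  have herr := isLittleO_log_factorial_sub.tendsto_div_nhds_zero.comp
    (tendsto_natCast_atTop_iff.mp hmtop)
  have := ((hm.mul (hm.log hx.ne')).sub hm).add (herr.mul hm)
  rw [zero_mul, add_zero] at this
  refine this.congr' ?_
  filter_upwards [hVpos, hmtop.eventually_gt_atTop 0] with n hVn hmn
  simp only [Function.comp_apply]
  rw [log_div hmn.ne' hVn.ne']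
  field_simp
  ring

theorem log_add_choose (i j : ℕ) :
    log ((i + j).choose i : ℝ) = log (i + j)! - log i ! - log j ! := by
  have h : ((i + j).choose i : ℝ) * j ! * i ! = (i + j)! := by
    rw [add_comm i j]; exact_mod_cast Nat.add_choose_mul_factorial_mul_factorial j i
  have hC : ((i + j).choose i : ℝ) ≠ 0 := by
    exact_mod_cast (Nat.choose_pos (Nat.le_add_right i j)).ne'
  rw [← h, log_mul (mul_ne_zero hC (by positivity)) (by positivity), log_mul hC (by positivity)]
  ring

theorem tendsto_log_add_choose_div {V : ℕ → ℝ} {a b : ℕ → ℕ} {x y : ℝ}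
    (hV : Tendsto V atTop atTop) (hx : 0 < x) (hy : 0 < y)
    (ha : Tendsto (fun n => (a n : ℝ) / V n) atTop (𝓝 x))
    (hb : Tendsto (fun n => (b n : ℝ) / V n) atTop (𝓝 y)) :
    Tendsto (fun n => log ((a n + b n).choose (a n) : ℝ) / V n) atTop
      (𝓝 ((x + y) * log (x + y) - x * log x - y * log y)) := by
  have hab : Tendsto (fun n => ((a n + b n : ℕ) : ℝ) / V n) atTop (𝓝 (x + y)) := by
    simpa only [Nat.cast_add, add_div] using ha.add hb
  have := ((tendsto_log_factorial_sub_mul_log_div hV (add_pos hx hy) hab).sub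
    (tendsto_log_factorial_sub_mul_log_div hV hx ha)).sub
    (tendsto_log_factorial_sub_mul_log_div hV hy hb)
  convert this using 2 with n
  · rw [log_add_choose]; push_cast; ring
  · ring

theorem stmt_0_general (κ₁ κ₂ M : ℝ) (hκ₁ : 0 < κ₁) (hκ₂ : 0 < κ₂) (hM : 0 < M)
    (V : ℕ → ℝ) (hV : Tendsto V atTop atTop)
    (N : ℕ → ℕ) (hN : ∀ n, (N n : ℝ) = V n * M)   -- VM ∈ ℤ
    (xA xB : ℕ → ℕ)
    (hmem : ∀ n, 1 ≤ xA n ∧ xA n + xB n = N n)    -- (xA, xB) ∈ Γ^V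
    (xtA xtB : ℝ) (hxtA : 0 < xtA) (hxtB : 0 < xtB)
    (hA : Tendsto (fun n => (xA n : ℝ) / V n) atTop (nhds xtA))
    (hB : Tendsto (fun n => (xB n : ℝ) / V n) atTop (nhds xtB)) :
    Tendsto
      (fun n =>
        -(1 / V n) * Real.log
          ((1 / (1 - (κ₁ / (κ₁ + κ₂)) ^ (N n))) * (Nat.choose (N n) (xA n)) *
            (κ₂ / (κ₁ + κ₂)) ^ (xA n) * (κ₁ / (κ₁ + κ₂)) ^ (xB n)))
      atTop
      (nhds (xtA * (Real.log xtA - Real.log (κ₂ / (κ₁ + κ₂)))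
        + xtB * (Real.log xtB - Real.log (κ₁ / (κ₁ + κ₂))) - M * Real.log M)) := by
  set p := κ₂ / (κ₁ + κ₂)
  set q := κ₁ / (κ₁ + κ₂)
  have hq1 : q < 1 := (div_lt_one (by positivity)).2 (by linarith)
  have hNtop : Tendsto N atTop atTop := tendsto_natCast_atTop_iff.mp <|
    (hV.atTop_mul_const hM).congr fun n => (hN n).symm
  have hMsum : xtA + xtB = M := tendsto_nhds_unique (hA.add hB) <| tendsto_const_nhds.congr' <| by
    filter_upwards [hV.eventually_gt_atTop 0] with n hVn
    rw [← add_div, ← Nat.cast_add, (hmem n).2, hN n, mul_div_cancel_left₀ _ hVn.ne']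
  have hZ : Tendsto (fun n => log (1 - q ^ N n) / V n) atTop (𝓝 0) := by
    have := (((tendsto_pow_atTop_nhds_zero_of_lt_one (by positivity) hq1).comp hNtop).const_sub
      1).log (by norm_num)
    simpa using this.div_atTop hV
  have key := ((hZ.sub (tendsto_log_add_choose_div hV hxtA hxtB hA hB)).sub
    (hA.mul_const (log p))).sub (hB.mul_const (log q))
  rw [hMsum] at key
  convert key.congr' ?_ using 2
  · ring
  · filter_upwards [hNtop.eventually_gt_atTop 0] with n hn
    have hZpos : 0 < 1 - q ^ N n := sub_pos.2 (pow_lt_one₀ (by positivity) hq1 hn.ne')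
    rw [← (hmem n).2] at hZpos ⊢
    have hC : (0 : ℝ) < (xA n + xB n).choose (xA n) := by
      exact_mod_cast Nat.choose_pos (Nat.le_add_right _ _)
    rw [log_mul (by positivity) (by positivity), log_mul (by positivity) (by positivity),
      log_mul (by positivity) hC.ne', log_pow, log_pow, log_div one_ne_zero hZpos.ne', log_one]
    ring

/-- Scaling limit of the non-equilibrium potential for the binomial-type stationary
distribution of the network `2A ⇌ A+B`. -/
theorem stmt_0 (κ₁ κ₂ M : ℝ) (hκ₁ : 0 < κ₁) (hκ₂ : 0 < κ₂) (hM : 0 < M)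
    (V : ℕ → ℝ) (hV : Tendsto V atTop atTop) (hVpos : ∀ n, 0 < V n)
    (N : ℕ → ℕ) (hN : ∀ n, (N n : ℝ) = V n * M)   -- VM ∈ ℤ
    (xA xB : ℕ → ℕ)
    (hmem : ∀ n, 1 ≤ xA n ∧ xA n + xB n = N n)    -- (xA, xB) ∈ Γ^V
    (xtA xtB : ℝ) (hxtA : 0 < xtA) (hxtB : 0 < xtB)
    (hA : Tendsto (fun n => (xA n : ℝ) / V n) atTop (nhds xtA))
    (hB : Tendsto (fun n => (xB n : ℝ) / V n) atTop (nhds xtB)) :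
    Tendsto
      (fun n =>
        -(1 / V n) * Real.log
          ((1 / (1 - (κ₁ / (κ₁ + κ₂)) ^ (N n))) * (Nat.choose (N n) (xA n)) *
            (κ₂ / (κ₁ + κ₂)) ^ (xA n) * (κ₁ / (κ₁ + κ₂)) ^ (xB n)))
      atTop
      (nhds (xtA * (Real.log xtA - Real.log (κ₂ / (κ₁ + κ₂)))
        + xtB * (Real.log xtB - Real.log (κ₁ / (κ₁ + κ₂))) - M * Real.log M)) :=
  stmt_0_general κ₁ κ₂ M hκ₁ hκ₂ hM V hV N hN xA xB hmem xtA xtB hxtA hxtB hA hB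
end

section
/- Fix c ∈ ℝ^d_{>0} and for V > 0 define the product-Poisson probability mass function π^V(x) = Π_{i=1}^d e^{−Vc_i}(Vc_i)^{x_i}/(x_i!) on ℤ^d_{≥0}. If x̃^V ∈ (1/V)ℤ^d_{≥0} is a sequence with x̃^V → x̃ ∈ ℝ^d_{>0} as V → ∞, then −(1/V)·ln(π^V(V·x̃^V)) → Σ_{i=1}^d [x̃_i(ln x̃_i − ln c_i − 1) + c_i]. -/
open Filter Real

lemma log_fact_eq (m : ℕ) (hm : 1 ≤ m) :
    Real.log (Nat.factorial m) =
      Real.log (Stirling.stirlingSeq m) + 1 / 2 * Real.log (2 * m)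
        + m * (Real.log m - 1) := by
  have h := Stirling.log_stirlingSeq_formula m
  have hm' : (0:ℝ) < m := by exact_mod_cast hm
  have : Real.log ((m : ℝ) / Real.exp 1) = Real.log m - 1 := by
    rw [Real.log_div (ne_of_gt hm') (Real.exp_ne_zero 1), Real.log_exp]
  rw [this] at h
  linarith

lemma key (c : ℝ) (hc : 0 < c)
    (V : ℕ → ℝ) (hV : Tendsto V atTop atTop) (hVpos : ∀ n, 0 < V n)
    (x : ℕ → ℕ) (xt : ℝ) (hxt : 0 < xt)
    (hconv : Tendsto (fun n => (x n : ℝ) / V n) atTop (nhds xt)) :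
    Tendsto
      (fun n => -(1 / V n) * Real.log
          (Real.exp (-(V n * c)) * (V n * c) ^ (x n) / (Nat.factorial (x n))))
      atTop (nhds (xt * (Real.log xt - Real.log c - 1) + c)) := by
  -- x n → ∞
  have hxR : Tendsto (fun n => (x n : ℝ)) atTop atTop := by
    have h1 : Tendsto (fun n => ((x n : ℝ) / V n) * V n) atTop atTop :=
      Tendsto.pos_mul_atTop hxt hconv hV
    refine h1.congr (fun n => ?_)
    rw [div_mul_cancel₀ _ (ne_of_gt (hVpos n))]
  have hxinf : Tendsto x atTop atTop := tendsto_natCast_atTop_iff.mp hxR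
  have hev : ∀ᶠ n in atTop, 1 ≤ x n := hxinf.eventually_ge_atTop 1
  -- auxiliary limits
  have hinvV : Tendsto (fun n => (V n)⁻¹) atTop (nhds 0) := hV.inv_tendsto_atTop
  have hlogS : Tendsto (fun n => Real.log (Stirling.stirlingSeq (x n))) atTop
      (nhds (Real.log (Real.sqrt Real.pi))) := by
    have h0 : (0:ℝ) < Real.sqrt Real.pi := Real.sqrt_pos.2 Real.pi_pos
    exact ((Real.continuousAt_log (ne_of_gt h0)).tendsto).comp
      (Stirling.tendsto_stirlingSeq_sqrt_pi.comp hxinf)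
  have hlogSV : Tendsto (fun n => Real.log (Stirling.stirlingSeq (x n)) / V n) atTop (nhds 0) := by
    have := hlogS.mul hinvV
    simpa [div_eq_mul_inv] using this
  have hlogxV : Tendsto (fun n => Real.log (x n) / V n) atTop (nhds 0) := by
    have hlxx : Tendsto (fun y : ℝ => Real.log y / y) atTop (nhds 0) :=
      Real.isLittleO_log_id_atTop.tendsto_div_nhds_zero
    have h1 : Tendsto (fun n => (Real.log (x n) / (x n)) * ((x n : ℝ) / V n)) atTop
        (nhds (0 * xt)) := (hlxx.comp hxR).mul hconv
    rw [zero_mul] at h1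
    refine Tendsto.congr' ?_ h1
    filter_upwards [hev] with n hn
    have hx0 : (x n : ℝ) ≠ 0 := by positivity
    field_simp
  have hlog2V : Tendsto (fun n => Real.log 2 / V n) atTop (nhds 0) := by
    have := hinvV.const_mul (Real.log 2)
    simpa [div_eq_mul_inv, mul_comm] using this
  have hlogh : Tendsto (fun n => Real.log ((x n : ℝ) / V n)) atTop (nhds (Real.log xt)) :=
    ((Real.continuousAt_log (ne_of_gt hxt)).tendsto).comp hconv
  -- the main limit for the simplified expression
  have hg : Tendsto (fun n =>
      c - ((x n : ℝ) / V n) * Real.log c + ((x n : ℝ) / V n) * Real.log ((x n : ℝ) / V n)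
        - (x n : ℝ) / V n
        + (Real.log (Stirling.stirlingSeq (x n)) / V n
            + 1 / 2 * (Real.log 2 / V n + Real.log (x n) / V n)))
      atTop (nhds (c - xt * Real.log c + xt * Real.log xt - xt + (0 + 1/2 * (0 + 0)))) := by
    exact ((((tendsto_const_nhds.sub (hconv.mul tendsto_const_nhds)).add
      (hconv.mul hlogh)).sub hconv).add
      (hlogSV.add ((hlog2V.add hlogxV).const_mul (1/2:ℝ))))
  have htarget : c - xt * Real.log c + xt * Real.log xt - xt + (0 + 1/2 * (0 + 0))
      = xt * (Real.log xt - Real.log c - 1) + c := by ring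
  rw [htarget] at hg
  refine Tendsto.congr' ?_ hg
  filter_upwards [hev] with n hn
  have hVn := hVpos n
  have hVne : V n ≠ 0 := ne_of_gt hVn
  have hxn : (0:ℝ) < (x n : ℝ) := by exact_mod_cast hn
  have hVc : (0:ℝ) < V n * c := by positivity
  have hfac : (0:ℝ) < (Nat.factorial (x n) : ℝ) := by positivity
  rw [Real.log_div (by positivity) (ne_of_gt hfac),
    Real.log_mul (Real.exp_ne_zero _) (by positivity), Real.log_exp, Real.log_pow,
    log_fact_eq (x n) hn, Real.log_mul hVne (ne_of_gt hc),
    Real.log_div (ne_of_gt hxn) hVne,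
    Real.log_mul (by norm_num : (2:ℝ) ≠ 0) (ne_of_gt hxn)]
  field_simp
  ring

/-- Scaling limit of the non-equilibrium potential of the product-Poisson stationary
distribution of a complex balanced system: it converges to the CRNT Lyapunov function. -/
theorem stmt_4 (d : ℕ) (c : Fin d → ℝ) (hc : ∀ i, 0 < c i)
    (V : ℕ → ℝ) (hV : Tendsto V atTop atTop) (hVpos : ∀ n, 0 < V n)
    (x : ℕ → Fin d → ℕ) (xt : Fin d → ℝ) (hxt : ∀ i, 0 < xt i)
    (hconv : ∀ i, Tendsto (fun n => (x n i : ℝ) / V n) atTop (nhds (xt i))) :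
    Tendsto
      (fun n =>
        -(1 / V n) * Real.log
          (∏ i, Real.exp (-(V n * c i)) * (V n * c i) ^ (x n i) / (Nat.factorial (x n i))))
      atTop
      (nhds (∑ i, (xt i * (Real.log (xt i) - Real.log (c i) - 1) + c i))) := by
  have hsum : Tendsto (fun n => ∑ i, -(1 / V n) * Real.log
      (Real.exp (-(V n * c i)) * (V n * c i) ^ (x n i) / (Nat.factorial (x n i))))
      atTop (nhds (∑ i, (xt i * (Real.log (xt i) - Real.log (c i) - 1) + c i))) := by
    exact tendsto_finset_sum _ (fun i _ =>
      key (c i) (hc i) V hV hVpos (fun n => x n i) (xt i) (hxt i) (hconv i))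
  refine Tendsto.congr (fun n => ?_) hsum
  rw [← Finset.mul_sum, ← Real.log_prod]
  intro i _
  have := hVpos n
  have hci := hc i
  positivity
end

section
/- Let c ∈ ℝ^d_{>0}, let Γ ⊂ ℤ^d_{≥0} with normalizing constant Z_Γ = Σ_{x∈Γ} Π_i c_i^{x_i} e^{−c_i}/x_i! finite and positive, and define π_Γ(x) = (1/Z_Γ) Π_i c_i^{x_i} e^{−c_i}/x_i! for x ∈ Γ. Suppose the mass-action stochastic system is complex balanced at c, i.e., for every complex z, Σ_{k: ν'_k = z} κ_k c^{ν_k} = Σ_{k: ν_k = z} κ_k c^{ν_k}. Then π_Γ satisfies the stationarity equation Σ_k π_Γ(x − ζ_k)λ_k(x − ζ_k) = π_Γ(x) Σ_k λ_k(x) for all x ∈ Γ, where λ_k(x) = κ_k Π_i x_i!/(x_i − ν_{ki})! · 1{x_i ≥ ν_{ki}} and ζ_k = ν'_k − ν_k, with π_Γ(x − ζ_k) = 0 when x − ζ_k ∉ Γ. -/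
/-!
Let `w(x) = ∏ᵢ cᵢ^{xᵢ} e^{-cᵢ} / xᵢ!`, `x^{(z)} = ∏ᵢ xᵢ!/(xᵢ - zᵢ)!` and `G(z) = w(x) x^{(z)} / c^z`.
The identity `cⁿ e^{-c}/n! · n!/(n - a)! = cᵃ · c^{n-a} e^{-c}/(n - a)!` shows that the flux into
`x` along reaction `k`, `w(x - ζₖ) λₖ(x - ζₖ)`, equals `κₖ c^{νₖ} G(ν'ₖ)`, while the flux out of `x`
along `k` is `κₖ c^{νₖ} G(νₖ)`. Grouping the reactions by complex,
complex balance equates the two totals. Restricting `w` to `Γ` loses no inflow, because the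
complement of `Γ` is closed: a state outside `Γ` that leads to `x` has zero intensity.
-/

open scoped Classical

open Real

open Finset

theorem Finset.sum_mul_comp_eq_of_sum_filter_eq {ι β M : Type*} [DecidableEq β]
    [NonUnitalNonAssocSemiring M] {s : Finset ι} {a : ι → M} {f g : ι → β}
    (h : ∀ z, ∑ k ∈ s with f k = z, a k = ∑ k ∈ s with g k = z, a k) (G : β → M) :
    ∑ k ∈ s, a k * G (f k) = ∑ k ∈ s, a k * G (g k) := by
  set t := s.image f ∪ s.image g
  have fiberwise : ∀ φ : ι → β, (∀ k ∈ s, φ k ∈ t) →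
      ∑ k ∈ s, a k * G (φ k) = ∑ z ∈ t, (∑ k ∈ s with φ k = z, a k) * G z := by
    intro φ hφ
    rw [← sum_fiberwise_of_maps_to hφ]
    refine sum_congr rfl fun z _ => ?_
    rw [sum_mul]
    exact sum_congr rfl fun k hk => by rw [(mem_filter.mp hk).2]
  rw [fiberwise f fun k hk => mem_union_left _ (mem_image_of_mem f hk),
    fiberwise g fun k hk => mem_union_right _ (mem_image_of_mem g hk)]
  exact sum_congr rfl fun z _ => by rw [h z]

section ProductForm

variable {ι : Type*} [Fintype ι]

/-- Negative coordinates are read through `Int.toNat`; only nonnegative states ever carry mass. -/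
noncomputable def poissonWeight (c : ι → ℝ) (x : ι → ℤ) : ℝ :=
  ∏ i, c i ^ (x i).toNat * exp (-c i) / (Nat.factorial (x i).toNat)

def fallingFactorial (x : ι → ℤ) (z : ι → ℕ) : ℝ :=
  ∏ i, ∏ j ∈ range (z i), ((x i : ℝ) - j)

theorem prod_range_intCast_sub_eq_descFactorial {t : ℤ} (ht : 0 ≤ t) (a : ℕ) :
    ∏ j ∈ range a, ((t : ℝ) - j) = t.toNat.descFactorial a := by
  lift t to ℕ using ht
  rw [← descPochhammer_eval_eq_prod_range, Int.cast_natCast, Int.toNat_natCast,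
    descPochhammer_eval_eq_descFactorial]

theorem prod_ite_le_eq_fallingFactorial {x : ι → ℤ} (hx : ∀ i, 0 ≤ x i) (z : ι → ℕ) :
    ∏ i, (if (z i : ℤ) ≤ x i then ∏ j ∈ range (z i), ((x i : ℝ) - j) else 0) =
      fallingFactorial x z := by
  refine prod_congr rfl fun i _ => ?_
  rw [prod_range_intCast_sub_eq_descFactorial (hx i), ite_eq_left_iff, eq_comm, Nat.cast_eq_zero,
    Nat.descFactorial_eq_zero_iff_lt]
  have := hx i
  omega

theorem fallingFactorial_eq_zero {x : ι → ℤ} {z : ι → ℕ} (i : ι) (hx : 0 ≤ x i)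
    (hxz : x i < z i) : fallingFactorial x z = 0 := by
  refine prod_eq_zero (mem_univ i) ?_
  rw [prod_range_intCast_sub_eq_descFactorial hx, Nat.cast_eq_zero,
    Nat.descFactorial_eq_zero_iff_lt]
  omega

theorem pow_mul_exp_div_factorial_mul_descFactorial (c : ℝ) {m a : ℕ} (h : a ≤ m) :
    c ^ m * exp (-c) / (Nat.factorial m) * m.descFactorial a =
      c ^ a * (c ^ (m - a) * exp (-c) / (Nat.factorial (m - a))) := by
  obtain ⟨r, rfl⟩ := Nat.exists_eq_add_of_le' h
  rw [Nat.add_sub_cancel, ← Nat.factorial_mul_descFactorial h, Nat.add_sub_cancel]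
  have : (Nat.factorial r : ℝ) ≠ 0 := by positivity
  push_cast
  field_simp
  ring

/-- Both sides equal `cᵃ cᵇ · cʳ e^{-c} / r!` with `r = m - a = n - b` when `a ≤ m`; otherwise
both falling factorials vanish. -/
theorem poisson_mul_descFactorial_mul_pow_eq (c : ℝ) {m n a b : ℕ} (h : m + b = n + a) :
    c ^ m * exp (-c) / (Nat.factorial m) * m.descFactorial a * c ^ b =
      c ^ a * (c ^ n * exp (-c) / (Nat.factorial n) * n.descFactorial b) := by
  by_cases ham : a ≤ m
  · rw [pow_mul_exp_div_factorial_mul_descFactorial c ham,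
      pow_mul_exp_div_factorial_mul_descFactorial c (show b ≤ n by omega),
      show n - b = m - a by omega]
    ring
  · rw [Nat.descFactorial_eq_zero_iff_lt.mpr (show m < a by omega),
      Nat.descFactorial_eq_zero_iff_lt.mpr (show n < b by omega)]
    simp

theorem poissonWeight_mul_fallingFactorial_mul_prod_pow (c : ι → ℝ) {x y : ι → ℤ}
    (hx : ∀ i, 0 ≤ x i) (hy : ∀ i, 0 ≤ y i) {a b : ι → ℕ} (h : ∀ i, y i - a i = x i - b i) :
    poissonWeight c y * fallingFactorial y a * ∏ i, c i ^ b i =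
      (∏ i, c i ^ a i) * (poissonWeight c x * fallingFactorial x b) := by
  simp only [poissonWeight, fallingFactorial, ← prod_mul_distrib]
  refine prod_congr rfl fun i _ => ?_
  rw [prod_range_intCast_sub_eq_descFactorial (hy i),
    prod_range_intCast_sub_eq_descFactorial (hx i)]
  have := h i
  have := hx i
  have := hy i
  exact poisson_mul_descFactorial_mul_pow_eq (c i) (by omega)

theorem productForm_inflow_eq {c : ι → ℝ} (hc : ∀ i, c i ≠ 0) {Γ : Set (ι → ℤ)}
    (hΓ : ∀ x ∈ Γ, ∀ i, 0 ≤ x i) {Z : ℝ} {p : (ι → ℤ) → ℝ}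
    (hp : ∀ x, p x = if x ∈ Γ then 1 / Z * poissonWeight c x else 0)
    {ν ν' : ι → ℕ} {ζ : ι → ℤ} (hζ : ∀ i, ζ i = ν' i - ν i) {κ : ℝ} {lam : (ι → ℤ) → ℝ}
    (hlam : ∀ y, (∀ i, 0 ≤ y i) → lam y = κ * fallingFactorial y ν)
    (hclosed : ∀ y, (∀ i, 0 ≤ y i) → y ∉ Γ → lam y ≠ 0 → y + ζ ∉ Γ) {x : ι → ℤ} (hx : x ∈ Γ) :
    p (x - ζ) * lam (x - ζ) =
      κ * (∏ i, c i ^ ν i) * (p x * fallingFactorial x ν' / ∏ i, c i ^ ν' i) := by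
  have hx₀ := hΓ x hx
  have hcν' : ∏ i, c i ^ ν' i ≠ 0 := prod_ne_zero_iff.mpr fun i _ => pow_ne_zero _ (hc i)
  set y := x - ζ
  have hyx : ∀ i, y i - ν i = x i - ν' i := fun i => by simp only [y, Pi.sub_apply, hζ]; ring
  by_cases hy₀ : ∀ i, 0 ≤ y i
  · -- off `Γ` the intensity vanishes, since the complement of `Γ` is closed and `y + ζ = x ∈ Γ`
    have hpy : p y * lam y = 1 / Z * poissonWeight c y * lam y := by
      rw [hp y]
      split_ifs with hyΓ
      · rfl
      · have : lam y = 0 := by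
          by_contra hne
          exact hclosed y hy₀ hyΓ hne (by simpa [y] using hx)
        rw [this, mul_zero, mul_zero]
    have key := poissonWeight_mul_fallingFactorial_mul_prod_pow c hx₀ hy₀ hyx
    rw [hpy, hp x, if_pos hx, hlam y hy₀, mul_div_assoc', eq_div_iff hcν']
    linear_combination κ / Z * key
  · push Not at hy₀
    obtain ⟨i, hi⟩ := hy₀
    have hyΓ : y ∉ Γ := fun h => (hΓ y h i).not_gt hi
    rw [hp y, if_neg hyΓ, fallingFactorial_eq_zero i (hx₀ i) (by linarith [hyx i])]
    simp

end ProductForm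

theorem stmt_6_general (d m : ℕ)
    (ν ν' : Fin m → Fin d → ℕ)                          -- source and product complexes
    (κ : Fin m → ℝ)                                     -- rate constants
    (ζ : Fin m → Fin d → ℤ) (hζ : ∀ k i, ζ k i = (ν' k i : ℤ) - (ν k i : ℤ))
    (lam : Fin m → (Fin d → ℤ) → ℝ)                     -- stochastic mass-action intensities
    (hlam : ∀ k x, lam k x =
      κ k * ∏ i, (if (ν k i : ℤ) ≤ x i then ∏ j ∈ Finset.range (ν k i), ((x i : ℝ) - j) else 0))
    (c : Fin d → ℝ) (hc : ∀ i, 0 < c i)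
    -- complex balance of c: for every complex z, inflow equals outflow
    (hcb : ∀ z : Fin d → ℕ,
      ∑ k ∈ Finset.univ.filter (fun k => ν' k = z), κ k * ∏ i, c i ^ ν k i =
      ∑ k ∈ Finset.univ.filter (fun k => ν k = z), κ k * ∏ i, c i ^ ν k i)
    (Γ : Set (Fin d → ℤ)) (hΓnn : ∀ x ∈ Γ, ∀ i, 0 ≤ x i)
    -- Γ is a closed (irreducible) component: both Γ and its complement are closed under
    -- the transitions of the chain
    (hclosed' : ∀ x : Fin d → ℤ, (∀ i, 0 ≤ x i) → x ∉ Γ → ∀ k, lam k x ≠ 0 → (x + ζ k) ∉ Γ)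
    (ZΓ : ℝ)
    (πΓ : (Fin d → ℤ) → ℝ)
    (hπ : ∀ x, πΓ x = if x ∈ Γ then
      (1 / ZΓ) * ∏ i, c i ^ (x i).toNat * Real.exp (-c i) / (Nat.factorial (x i).toNat)
      else 0) :
    ∀ x ∈ Γ, ∑ k, πΓ (x - ζ k) * lam k (x - ζ k) = πΓ x * ∑ k, lam k x := by
  intro x hx
  have hc₀ : ∀ i, c i ≠ 0 := fun i => (hc i).ne'
  have hlam₀ : ∀ k y, (∀ i, 0 ≤ y i) → lam k y = κ k * fallingFactorial y (ν k) :=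
    fun k y hy => by rw [hlam, prod_ite_le_eq_fallingFactorial hy]
  set G : (Fin d → ℕ) → ℝ := fun z => πΓ x * fallingFactorial x z / ∏ i, c i ^ z i
  calc ∑ k, πΓ (x - ζ k) * lam k (x - ζ k)
      = ∑ k, κ k * (∏ i, c i ^ ν k i) * G (ν' k) := sum_congr rfl fun k _ =>
        productForm_inflow_eq hc₀ hΓnn hπ (hζ k) (hlam₀ k)
          (fun y hy hyΓ => hclosed' y hy hyΓ k) hx
    _ = ∑ k, κ k * (∏ i, c i ^ ν k i) * G (ν k) := sum_mul_comp_eq_of_sum_filter_eq hcb G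
    _ = ∑ k, πΓ x * lam k x := sum_congr rfl fun k _ => by
        rw [hlam₀ k x (hΓnn x hx)]
        simp only [G]
        field_simp [prod_ne_zero_iff.mpr fun i _ => pow_ne_zero (ν k i) (hc₀ i)]
    _ = πΓ x * ∑ k, lam k x := (mul_sum ..).symm

/-- Anderson–Craciun–Kurtz: for a mass-action reaction network that is complex balanced at
`c`, the product-form Poisson distribution restricted to a closed irreducible component `Γ`
of the state space satisfies the stationarity equation of the chemical master equation. -/
theorem stmt_6 (d m : ℕ)
    (ν ν' : Fin m → Fin d → ℕ)                          -- source and product complexes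
    (κ : Fin m → ℝ) (hκ : ∀ k, 0 < κ k)                 -- rate constants
    (ζ : Fin m → Fin d → ℤ) (hζ : ∀ k i, ζ k i = (ν' k i : ℤ) - (ν k i : ℤ))
    (lam : Fin m → (Fin d → ℤ) → ℝ)                     -- stochastic mass-action intensities
    (hlam : ∀ k x, lam k x =
      κ k * ∏ i, (if (ν k i : ℤ) ≤ x i then ∏ j ∈ Finset.range (ν k i), ((x i : ℝ) - j) else 0))
    (c : Fin d → ℝ) (hc : ∀ i, 0 < c i)
    -- complex balance of c: for every complex z, inflow equals outflow
    (hcb : ∀ z : Fin d → ℕ,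
      ∑ k ∈ Finset.univ.filter (fun k => ν' k = z), κ k * ∏ i, c i ^ ν k i =
      ∑ k ∈ Finset.univ.filter (fun k => ν k = z), κ k * ∏ i, c i ^ ν k i)
    (Γ : Set (Fin d → ℤ)) (hΓnn : ∀ x ∈ Γ, ∀ i, 0 ≤ x i)
    -- Γ is a closed (irreducible) component: both Γ and its complement are closed under
    -- the transitions of the chain
    (hclosed : ∀ x ∈ Γ, ∀ k, lam k x ≠ 0 → (x + ζ k) ∈ Γ)
    (hclosed' : ∀ x : Fin d → ℤ, (∀ i, 0 ≤ x i) → x ∉ Γ → ∀ k, lam k x ≠ 0 → (x + ζ k) ∉ Γ)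
    (ZΓ : ℝ)
    (hZΓ : ZΓ = ∑' x : Γ, ∏ i, c i ^ ((x : Fin d → ℤ) i).toNat * Real.exp (-c i) /
      (Nat.factorial ((x : Fin d → ℤ) i).toNat))
    (hZfin : Summable (fun x : Γ => ∏ i, c i ^ ((x : Fin d → ℤ) i).toNat * Real.exp (-c i) /
      (Nat.factorial ((x : Fin d → ℤ) i).toNat)))
    (hZpos : 0 < ZΓ)
    (πΓ : (Fin d → ℤ) → ℝ)
    (hπ : ∀ x, πΓ x = if x ∈ Γ then
      (1 / ZΓ) * ∏ i, c i ^ (x i).toNat * Real.exp (-c i) / (Nat.factorial (x i).toNat)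
      else 0) :
    ∀ x ∈ Γ, ∑ k, πΓ (x - ζ k) * lam k (x - ζ k) = πΓ x * ∑ k, lam k x :=
  stmt_6_general d m ν ν' κ ζ hζ lam hlam c hc hcb Γ hΓnn hclosed' ZΓ πΓ hπ
end

section
/- Let p_{i-1}/q_i be the birth/death ratios of the V-scaled one-species mass-action birth-death chain, i.e., p_{i-1} = Σ_{n≥0} (κ_n/V^{|ν_n|−1})(i−1)(i−2)···(i−|ν_n|), q_i = Σ_{n<0} (κ_n/V^{|ν_n|−1}) i(i−1)···(i−|ν_n|+1). If x̃^V ∈ (1/V)ℤ_{≥0} with x̃^V → x̃ ∈ (0,∞), then −(1/V) Σ_{i=i₀+1}^{V x̃^V} [ln p_{i−1} − ln q_i] → −∫₀^{x̃} ln( (Σ_{n≥0} κ_n u^{ν_n}) / (Σ_{n<0} κ_n u^{ν_n}) ) du as V → ∞. -/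
/-!
With `K` the largest source complex, `(i - K)ⁿ ≤ (j)ₙ ≤ iⁿ` for `n ≤ K` and `j ∈ {i - 1, i}`,
and `κ V^{1-n} yⁿ = V κ (y / V)ⁿ`. Hence for `i > K` both scaled rates are squeezed between
`V` times the deterministic rate `Σ κ uⁿ` at `u = (i - K) / V` and at `u = i / V`, the factors
`V` cancel in the log-ratio, and its sum is squeezed between shifted Riemann sums of the
increasing functions `log Σ κ uⁿ`. Comparing the Riemann sums of an increasing function with the
integrals over the adjacent cells shows that these converge to the integrals (logarithms of
polynomials are integrable at `0`). The finitely many terms with `i ≤ i₀ + K + 1` are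
`O(log V)`, so they vanish after division by `V`.
-/

open Filter Real MeasureTheory Set Topology

theorem tendsto_log_zpow_mul_div_atTop (k : ℤ) {C : ℝ} (hC : 0 < C) :
    Tendsto (fun t => log (t ^ k * C) / t) atTop (𝓝 0) := by
  have h := (tendsto_inv_atTop_zero.const_mul (log C)).add
    (isLittleO_log_id_atTop.tendsto_div_nhds_zero.const_mul (k : ℝ))
  rw [mul_zero, mul_zero, add_zero] at h
  refine h.congr' ?_
  filter_upwards [eventually_gt_atTop 0] with t ht
  rw [log_mul (zpow_ne_zero k ht.ne') hC.ne', log_zpow, id]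
  ring

theorem tendsto_log_div_of_zpow_bounds {V s : ℕ → ℝ} (hV : Tendsto V atTop atTop) {C : ℝ}
    (hC : 0 ≤ C) (k l : ℤ) (hs : ∀ᶠ m in atTop, V m ^ k * C ≤ s m ∧ s m ≤ V m ^ l * C) :
    Tendsto (fun m => log (s m) / V m) atTop (𝓝 0) := by
  rcases hC.eq_or_lt with rfl | hC
  · -- eventually `s m = 0`, and `log 0 = 0`
    refine tendsto_const_nhds.congr' ?_
    filter_upwards [hs] with m hm
    simp [le_antisymm (by simpa using hm.2) (by simpa using hm.1)]
  have hlog : ∀ᶠ m in atTop, log (V m ^ k * C) / V m ≤ log (s m) / V m ∧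
      log (s m) / V m ≤ log (V m ^ l * C) / V m := by
    filter_upwards [hs, hV.eventually_gt_atTop 0] with m hm hVm
    have hlow : 0 < V m ^ k * C := by positivity
    exact ⟨div_le_div_of_nonneg_right (log_le_log hlow hm.1) hVm.le,
      div_le_div_of_nonneg_right (log_le_log (hlow.trans_le hm.1) hm.2) hVm.le⟩
  exact tendsto_of_tendsto_of_tendsto_of_le_of_le'
    ((tendsto_log_zpow_mul_div_atTop k hC).comp hV) ((tendsto_log_zpow_mul_div_atTop l hC).comp hV)
    (hlog.mono fun _ h => h.1) (hlog.mono fun _ h => h.2)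

theorem tendsto_intervalIntegral_of_tendsto {ι : Type*} {l : Filter ι} {f : ℝ → ℝ}
    (hf : ∀ a b, IntervalIntegrable f volume a b) {u v : ι → ℝ} {a b : ℝ}
    (hu : Tendsto u l (𝓝 a)) (hv : Tendsto v l (𝓝 b)) :
    Tendsto (fun i => ∫ t in u i..v i, f t) l (𝓝 (∫ t in a..b, f t)) := by
  have hF := intervalIntegral.continuous_primitive hf a
  have h := ((hF.tendsto b).comp hv).sub ((hF.tendsto a).comp hu)
  simp only [Function.comp_def, intervalIntegral.integral_same, sub_zero] at h
  exact h.congr fun i => intervalIntegral.integral_interval_sub_left (hf a _) (hf a _)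

theorem eventually_ge_of_tendsto_cast_div {V : ℕ → ℝ} (hV : Tendsto V atTop atTop) {b : ℕ → ℕ}
    {x : ℝ} (hx : 0 < x) (hb : Tendsto (fun m => (b m : ℝ) / V m) atTop (𝓝 x)) (a : ℕ) :
    ∀ᶠ m in atTop, a ≤ b m := by
  have hgap : Tendsto (fun m => (b m - a : ℝ) / V m) atTop (𝓝 x) := by
    simpa only [sub_div, sub_zero] using hb.sub (tendsto_const_nhds.div_atTop hV)
  filter_upwards [hgap.eventually_const_lt hx, hV.eventually_gt_atTop 0] with m hm hVm
  exact_mod_cast (sub_pos.1 ((div_pos_iff_of_pos_right hVm).1 hm)).le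

section RiemannSum

variable {f : ℝ → ℝ} {V c : ℝ} {a b : ℕ}

theorem monotoneOn_comp_div_add (hf : MonotoneOn f (Ioi 0)) (hV : 0 < V) {s : ℝ}
    (hc : 0 < s + c) : MonotoneOn (fun t => f (t / V + c / V)) (Ici s) := by
  have pos : ∀ t ∈ Ici s, t / V + c / V ∈ Ioi 0 := fun t ht => by
    rw [← add_div]
    exact div_pos (by linarith [mem_Ici.1 ht]) hV
  exact fun t ht t' ht' htt' => hf (pos t ht) (pos t' ht') (by gcongr)

theorem integral_le_riemannSum (hf : MonotoneOn f (Ioi 0)) (hV : 0 < V) (hac : 0 < a + c)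
    (hab : a ≤ b) :
    ∫ u in (a + c) / V..(b + c) / V, f u ≤ V⁻¹ * ∑ i ∈ Finset.Ioc a b, f ((i + c) / V) := by
  have h := ((monotoneOn_comp_div_add hf hV hac).mono Icc_subset_Ici_self).integral_le_sum_Ico hab
  rw [intervalIntegral.integral_comp_div_add _ hV.ne', ← add_div, ← add_div, smul_eq_mul] at h
  rw [le_inv_mul_iff₀ hV, ← Finset.Ico_add_one_add_one_eq_Ioc, ← Finset.sum_Ico_add']
  simpa only [add_div, Nat.cast_add_one] using h

theorem riemannSum_le_integral (hf : MonotoneOn f (Ioi 0)) (hV : 0 < V) (hac : 0 < a + c)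
    (hab : a ≤ b) :
    V⁻¹ * ∑ i ∈ Finset.Ioc a b, f ((i + c) / V) ≤
      ∫ u in (a + 1 + c) / V..(b + 1 + c) / V, f u := by
  have hac' : 0 < ((a + 1 : ℕ) : ℝ) + c := by push_cast; linarith
  have h := ((monotoneOn_comp_div_add hf hV hac').mono Icc_subset_Ici_self).sum_le_integral_Ico
    (by omega : a + 1 ≤ b + 1)
  rw [intervalIntegral.integral_comp_div_add _ hV.ne', ← add_div, ← add_div, smul_eq_mul] at h
  rw [inv_mul_le_iff₀ hV, ← Finset.Ico_add_one_add_one_eq_Ioc]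
  simpa only [add_div, Nat.cast_add_one] using h

theorem tendsto_riemannSum_of_monotoneOn (hf : MonotoneOn f (Ioi 0))
    (hint : ∀ a b, IntervalIntegrable f volume a b) (hac : 0 < a + c) {V : ℕ → ℝ}
    (hV : Tendsto V atTop atTop) {b : ℕ → ℕ} {x : ℝ} (hx : 0 < x)
    (hb : Tendsto (fun m => (b m : ℝ) / V m) atTop (𝓝 x)) :
    Tendsto (fun m => (V m)⁻¹ * ∑ i ∈ Finset.Ioc a (b m), f ((i + c) / V m)) atTop
      (𝓝 (∫ u in 0..x, f u)) := by
  have hdiv (d : ℝ) : Tendsto (fun m => d / V m) atTop (𝓝 0) := tendsto_const_nhds.div_atTop hV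
  have hshift (d : ℝ) : Tendsto (fun m => (b m + d) / V m) atTop (𝓝 x) := by
    simpa only [add_div, add_zero] using hb.add (hdiv d)
  have hupper : Tendsto (fun m => (b m + 1 + c) / V m) atTop (𝓝 x) := by
    simpa only [add_assoc] using hshift (1 + c)
  have hbounds := (hV.eventually_gt_atTop 0).and (eventually_ge_of_tendsto_cast_div hV hx hb a)
  exact tendsto_of_tendsto_of_tendsto_of_le_of_le'
    (tendsto_intervalIntegral_of_tendsto hint (hdiv (a + c)) (hshift c))
    (tendsto_intervalIntegral_of_tendsto hint (hdiv (a + 1 + c)) hupper)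
    (hbounds.mono fun _ h => integral_le_riemannSum hf h.1 hac h.2)
    (hbounds.mono fun _ h => riemannSum_le_integral hf h.1 hac h.2)

end RiemannSum

def massAction (F : Finset ℕ) (κ : ℕ → ℝ) (u : ℝ) : ℝ := ∑ n ∈ F, κ n * u ^ n

noncomputable def stochMassAction (F : Finset ℕ) (κ : ℕ → ℝ) (V : ℝ) (j : ℕ) : ℝ :=
  ∑ n ∈ F, κ n / V ^ ((n : ℤ) - 1) * (j.descFactorial n : ℝ)

namespace massAction

variable {F : Finset ℕ} {κ : ℕ → ℝ}

theorem pos (hF : F.Nonempty) (hκ : ∀ n ∈ F, 0 < κ n) {u : ℝ} (hu : 0 < u) :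
    0 < massAction F κ u :=
  Finset.sum_pos (fun n hn => mul_pos (hκ n hn) (pow_pos hu n)) hF

theorem monotoneOn (hκ : ∀ n ∈ F, 0 ≤ κ n) : MonotoneOn (massAction F κ) (Ici 0) :=
  fun _ hu _ _ huv => Finset.sum_le_sum fun n hn =>
    mul_le_mul_of_nonneg_left (pow_le_pow_left₀ hu huv n) (hκ n hn)

theorem monotoneOn_log (hF : F.Nonempty) (hκ : ∀ n ∈ F, 0 < κ n) :
    MonotoneOn (fun u => log (massAction F κ u)) (Ioi 0) :=
  fun _ hu _ hv huv => log_le_log (pos hF hκ hu)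
    (monotoneOn (fun n hn => (hκ n hn).le) (Ioi_subset_Ici_self hu) (Ioi_subset_Ici_self hv) huv)

theorem intervalIntegrable_log (F : Finset ℕ) (κ : ℕ → ℝ) (a b : ℝ) :
    IntervalIntegrable (fun u => log (massAction F κ u)) volume a b :=
  MeromorphicOn.intervalIntegrable_log fun u _ =>
    (by unfold massAction; fun_prop : AnalyticAt ℝ (massAction F κ) u).meromorphicAt

theorem mul_apply_div {V : ℝ} (hV : V ≠ 0) (y : ℝ) :
    V * massAction F κ (y / V) = ∑ n ∈ F, κ n / V ^ ((n : ℤ) - 1) * y ^ n := by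
  rw [massAction, Finset.mul_sum]
  refine Finset.sum_congr rfl fun n _ => ?_
  rw [div_pow, zpow_sub₀ hV, zpow_one, zpow_natCast]
  field_simp

end massAction

namespace stochMassAction

variable {F : Finset ℕ} {κ : ℕ → ℝ} {V : ℝ}

theorem le_mul_massAction (hκ : ∀ n ∈ F, 0 ≤ κ n) (hV : 0 < V) {i j : ℕ} (hji : j ≤ i) :
    stochMassAction F κ V j ≤ V * massAction F κ (i / V) := by
  rw [massAction.mul_apply_div hV.ne']
  refine Finset.sum_le_sum fun n hn =>
    mul_le_mul_of_nonneg_left ?_ (div_nonneg (hκ n hn) (zpow_pos hV _).le)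
  exact_mod_cast (Nat.descFactorial_le_pow j n).trans (Nat.pow_le_pow_left hji n)

theorem mul_massAction_le (hκ : ∀ n ∈ F, 0 ≤ κ n) (hV : 0 < V) {K : ℕ} (hK : ∀ n ∈ F, n ≤ K)
    {i j : ℕ} (hKi : K ≤ i) (hij : i ≤ j + 1) :
    V * massAction F κ ((i - K) / V) ≤ stochMassAction F κ V j := by
  rw [massAction.mul_apply_div hV.ne']
  refine Finset.sum_le_sum fun n hn =>
    mul_le_mul_of_nonneg_left ?_ (div_nonneg (hκ n hn) (zpow_pos hV _).le)
  calc ((i : ℝ) - K) ^ n = ((i - K : ℕ) : ℝ) ^ n := by rw [Nat.cast_sub hKi]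
    _ ≤ ((j + 1 - n) ^ n : ℕ) := by
      have := hK n hn
      exact_mod_cast Nat.pow_le_pow_left (by omega) n
    _ ≤ j.descFactorial n := by exact_mod_cast Nat.pow_sub_le_descFactorial j n

theorem log_mem_Icc (hF : F.Nonempty) (hκ : ∀ n ∈ F, 0 < κ n) (hV : 0 < V) {K : ℕ}
    (hK : ∀ n ∈ F, n ≤ K) {i j : ℕ} (hKi : K < i) (hji : j ≤ i) (hij : i ≤ j + 1) :
    log (stochMassAction F κ V j) ∈
      Icc (log V + log (massAction F κ ((i - K) / V))) (log V + log (massAction F κ (i / V))) := by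
  have hκ' : ∀ n ∈ F, 0 ≤ κ n := fun n hn => (hκ n hn).le
  have hlow := mul_massAction_le hκ' hV hK hKi.le hij
  have hpos : 0 < massAction F κ ((i - K) / V) :=
    massAction.pos hF hκ (div_pos (sub_pos.2 (Nat.cast_lt.2 hKi)) hV)
  have hpos' : 0 < V * massAction F κ ((i - K) / V) := mul_pos hV hpos
  rw [← log_mul hV.ne' hpos.ne', ← log_mul hV.ne' (pos_of_mul_pos_right
    (hpos'.trans_le (hlow.trans (le_mul_massAction hκ' hV hji))) hV.le).ne']
  exact ⟨log_le_log hpos' hlow, log_le_log (hpos'.trans_le hlow) (le_mul_massAction hκ' hV hji)⟩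

theorem tendsto_log_div (hκ : ∀ n ∈ F, 0 ≤ κ n) {V : ℕ → ℝ} (hV : Tendsto V atTop atTop)
    (j : ℕ) : Tendsto (fun m => log (stochMassAction F κ (V m) j) / V m) atTop (𝓝 0) := by
  -- termwise `V ^ (1 - sup F) ≤ V ^ (1 - n) ≤ V` for `V ≥ 1`, against the rate at `V = 1`
  refine tendsto_log_div_of_zpow_bounds hV (C := stochMassAction F κ 1 j)
    (Finset.sum_nonneg fun n hn => by have := hκ n hn; positivity) (1 - F.sup id) 1 ?_
  filter_upwards [hV.eventually_ge_atTop 1] with m hm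
  have hterm (n : ℕ) : κ n / V m ^ ((n : ℤ) - 1) * j.descFactorial n =
      V m ^ (1 - (n : ℤ)) * (κ n * j.descFactorial n) := by
    rw [div_eq_mul_inv, ← zpow_neg, neg_sub]
    ring
  simp only [stochMassAction, one_zpow, div_one, Finset.mul_sum, hterm]
  constructor <;> refine Finset.sum_le_sum fun n hn =>
    mul_le_mul_of_nonneg_right (zpow_le_zpow_right₀ hm ?_) (by have := hκ n hn; positivity)
  · have := Finset.le_sup (f := id) hn
    simp only [id] at this
    omega
  · omega

end stochMassAction

theorem integral_log_div_massAction {U D : Finset ℕ} (hU : U.Nonempty) (hD : D.Nonempty)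
    {κu κd : ℕ → ℝ} (hκu : ∀ n ∈ U, 0 < κu n) (hκd : ∀ n ∈ D, 0 < κd n) {x : ℝ} (hx : 0 ≤ x) :
    ∫ u in 0..x, log (massAction U κu u / massAction D κd u) =
      (∫ u in 0..x, log (massAction U κu u)) - ∫ u in 0..x, log (massAction D κd u) := by
  rw [← intervalIntegral.integral_sub (massAction.intervalIntegrable_log U κu 0 x)
    (massAction.intervalIntegrable_log D κd 0 x)]
  refine intervalIntegral.integral_congr_ae (ae_of_all _ fun u hu => ?_)
  rw [uIoc_of_le hx] at hu
  exact log_div (massAction.pos hU hκu hu.1).ne' (massAction.pos hD hκd hu.1).ne'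

theorem tendsto_riemannSum_log_div_stochMassAction {U D : Finset ℕ} (hU : U.Nonempty)
    (hD : D.Nonempty) {κu κd : ℕ → ℝ} (hκu : ∀ n ∈ U, 0 < κu n) (hκd : ∀ n ∈ D, 0 < κd n)
    {K N : ℕ} (hKU : ∀ n ∈ U, n ≤ K) (hKD : ∀ n ∈ D, n ≤ K) (hKN : K < N) {V : ℕ → ℝ}
    (hV : Tendsto V atTop atTop) {x : ℕ → ℕ} {xt : ℝ} (hxt : 0 < xt)
    (hx : Tendsto (fun m => (x m : ℝ) / V m) atTop (𝓝 xt)) :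
    Tendsto (fun m => (V m)⁻¹ * ∑ i ∈ Finset.Ioc N (x m),
        (log (stochMassAction U κu (V m) (i - 1)) - log (stochMassAction D κd (V m) i)))
      atTop
      (𝓝 ((∫ u in 0..xt, log (massAction U κu u)) - ∫ u in 0..xt, log (massAction D κd u))) := by
  have riemann {F : Finset ℕ} {κ : ℕ → ℝ} (hF : F.Nonempty) (hκ : ∀ n ∈ F, 0 < κ n) {c : ℝ}
      (hc : 0 < N + c) := tendsto_riemannSum_of_monotoneOn (massAction.monotoneOn_log hF hκ)
    (massAction.intervalIntegrable_log F κ) hc hV hxt hx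
  have hc0 : (0 : ℝ) < N + 0 := by rw [add_zero]; exact_mod_cast (K.zero_le.trans_lt hKN)
  have hcK : (0 : ℝ) < N + -K := by rw [← sub_eq_add_neg, sub_pos]; exact_mod_cast hKN
  have hlow := (riemann hU hκu hcK).sub (riemann hD hκd hc0)
  have hup := (riemann hU hκu hc0).sub (riemann hD hκd hcK)
  simp only [← mul_sub, ← Finset.sum_sub_distrib, add_zero, ← sub_eq_add_neg] at hlow hup
  have hbounds : ∀ᶠ m in atTop, ∀ i ∈ Finset.Ioc N (x m),
      log (stochMassAction U κu (V m) (i - 1)) - log (stochMassAction D κd (V m) i) ∈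
        Icc (log (massAction U κu ((i - K) / V m)) - log (massAction D κd (i / V m)))
          (log (massAction U κu (i / V m)) - log (massAction D κd ((i - K) / V m))) := by
    filter_upwards [hV.eventually_gt_atTop 0] with m hVm i hi
    have hKi : K < i := hKN.trans (Finset.mem_Ioc.1 hi).1
    have hp := stochMassAction.log_mem_Icc hU hκu hVm hKU hKi (Nat.sub_le i 1) (by omega)
    have hq := stochMassAction.log_mem_Icc hD hκd hVm hKD hKi le_rfl (by omega)
    exact ⟨by linarith [hp.1, hq.2], by linarith [hp.2, hq.1]⟩
  refine tendsto_of_tendsto_of_tendsto_of_le_of_le' hlow hup ?_ ?_ <;>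
    filter_upwards [hbounds, hV.eventually_gt_atTop 0] with m hm hVm
  · exact mul_le_mul_of_nonneg_left (Finset.sum_le_sum fun i hi => (hm i hi).1) (by positivity)
  · exact mul_le_mul_of_nonneg_left (Finset.sum_le_sum fun i hi => (hm i hi).2) (by positivity)

theorem stmt_9_general (U D : Finset ℕ) (hU : U.Nonempty) (hD : D.Nonempty)
    (κu κd : ℕ → ℝ) (hκu : ∀ n ∈ U, 0 < κu n) (hκd : ∀ n ∈ D, 0 < κd n)
    (i₀ : ℕ)
    (V : ℕ → ℝ) (hV : Tendsto V atTop atTop)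
    (p q : ℕ → ℕ → ℝ)
    (hp : ∀ m i, p m i =
      ∑ n ∈ U, κu n / V m ^ ((n : ℤ) - 1) * (Nat.descFactorial i n : ℝ))
    (hq : ∀ m i, q m i =
      ∑ n ∈ D, κd n / V m ^ ((n : ℤ) - 1) * (Nat.descFactorial i n : ℝ))
    (x : ℕ → ℕ) (xt : ℝ) (hxt : 0 < xt)
    (hx : Tendsto (fun m => (x m : ℝ) / V m) atTop (nhds xt)) :
    Tendsto
      (fun m => -(1 / V m) *
        ∑ i ∈ Finset.Icc (i₀ + 1) (x m), (Real.log (p m (i - 1)) - Real.log (q m i)))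
      atTop
      (nhds (-(∫ u in (0 : ℝ)..xt,
        Real.log ((∑ n ∈ U, κu n * u ^ n) / (∑ n ∈ D, κd n * u ^ n))))) := by
  obtain ⟨K, hKU, hKD⟩ : ∃ K, (∀ n ∈ U, n ≤ K) ∧ ∀ n ∈ D, n ≤ K :=
    ⟨U.sup id ⊔ D.sup id, fun n hn => le_sup_of_le_left (Finset.le_sup (f := id) hn),
      fun n hn => le_sup_of_le_right (Finset.le_sup (f := id) hn)⟩
  obtain rfl : p = fun m => stochMassAction U κu (V m) := funext fun m => funext (hp m)
  obtain rfl : q = fun m => stochMassAction D κd (V m) := funext fun m => funext (hq m)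
  have hhead : Tendsto (fun m => (V m)⁻¹ * ∑ i ∈ Finset.Ioc i₀ (i₀ + K + 1),
      (log (stochMassAction U κu (V m) (i - 1)) - log (stochMassAction D κd (V m) i)))
      atTop (𝓝 0) := by
    simp only [Finset.mul_sum, mul_sub, inv_mul_eq_div]
    simpa using tendsto_finsetSum _ fun i _ =>
      (stochMassAction.tendsto_log_div (fun n hn => (hκu n hn).le) hV (i - 1)).sub
        (stochMassAction.tendsto_log_div (fun n hn => (hκd n hn).le) hV i)
  have htail := tendsto_riemannSum_log_div_stochMassAction hU hD hκu hκd hKU hKD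
    (by omega : K < i₀ + K + 1) hV hxt hx
  have hint : ∫ u in (0 : ℝ)..xt, log ((∑ n ∈ U, κu n * u ^ n) / (∑ n ∈ D, κd n * u ^ n)) = _ :=
    integral_log_div_massAction hU hD hκu hκd hxt.le
  rw [hint, ← zero_add (_ - _)]
  refine (hhead.add htail).neg.congr' ?_
  filter_upwards [eventually_ge_of_tendsto_cast_div hV hxt hx (i₀ + K + 1)] with m hm
  rw [Finset.Icc_add_one_left_eq_Ioc, one_div,
    ← Finset.sum_Ioc_consecutive _ (by omega : i₀ ≤ i₀ + K + 1) hm]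
  ring

/-- Riemann-sum convergence: the scaled sum of log birth/death ratios of the `V`-scaled
one-species mass-action birth-death chain converges to
`−∫₀^x̃ ln((Σ_{n≥0} κ_n u^{ν_n})/(Σ_{n<0} κ_n u^{ν_n})) du`. -/
theorem stmt_9 (U D : Finset ℕ) (hU : U.Nonempty) (hD : D.Nonempty)
    (hD1 : ∀ n ∈ D, 1 ≤ n)
    (κu κd : ℕ → ℝ) (hκu : ∀ n ∈ U, 0 < κu n) (hκd : ∀ n ∈ D, 0 < κd n)
    (i₀ : ℕ)
    (V : ℕ → ℝ) (hV : Tendsto V atTop atTop) (hVpos : ∀ m, 0 < V m)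
    (p q : ℕ → ℕ → ℝ)
    (hp : ∀ m i, p m i =
      ∑ n ∈ U, κu n / V m ^ ((n : ℤ) - 1) * (Nat.descFactorial i n : ℝ))
    (hq : ∀ m i, q m i =
      ∑ n ∈ D, κd n / V m ^ ((n : ℤ) - 1) * (Nat.descFactorial i n : ℝ))
    (x : ℕ → ℕ) (xt : ℝ) (hxt : 0 < xt)
    (hx : Tendsto (fun m => (x m : ℝ) / V m) atTop (nhds xt)) :
    Tendsto
      (fun m => -(1 / V m) *
        ∑ i ∈ Finset.Icc (i₀ + 1) (x m), (Real.log (p m (i - 1)) - Real.log (q m i)))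
      atTop
      (nhds (-(∫ u in (0 : ℝ)..xt,
        Real.log ((∑ n ∈ U, κu n * u ^ n) / (∑ n ∈ D, κd n * u ^ n))))) :=
  stmt_9_general U D hU hD κu κd hκu hκd i₀ V hV p q hp hq x xt hxt hx
end

section
/- Consider the network ∅ ⇌ X, 2X ⇌ 3X with rate constants κ₀, κ₋₁, κ₂, κ₋₃ > 0, and set B = κ₂/κ₋₃, R = κ₋₁/κ₋₃, P = κ₀/κ₂. The stationary distribution π^V(x) = π^V(0) Π_{i=1}^x B[(i−1)(i−2)+P]/(i(i−1)(i−2)+Ri) of the V-scaled stochastic model is Poisson with parameter VB if and only if P = R, i.e., π^V(x) ∝ (VB)^x/x! for all x ∈ ℤ_{≥0} iff κ₀κ₋₃ = κ₂κ₋₁. -/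
/-!
Clearing denominators, `κm3 · x · p(x-1) = κ₂V · q(x) + (κ₀κm3 - κ₂κm1) V x` identically in `x`:
the cubic and quadratic parts of the rates cancel against each other. So when `κ₀κm3 = κ₂κm1`
every factor `p(i-1)/q(i)` equals `VB/i` and the product is `(VB)^x/x!`; conversely the case
`x = 1` alone reads `κ₀V/κm1 = Vκ₂/κm3`.
-/

open Finset Nat

theorem Finset.prod_Icc_id_eq_factorial (n : ℕ) : ∏ i ∈ Icc 1 n, i = n ! := by
  rw [← Ico_add_one_right_eq_Icc, prod_Ico_id_eq_factorial]

theorem Finset.prod_Icc_eq_pow_div_factorial {K : Type*} [Field K] {r : ℕ → K} {c : K}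
    (hr : ∀ i, 1 ≤ i → r i = c / i) (n : ℕ) : ∏ i ∈ Icc 1 n, r i = c ^ n / n ! := by
  rw [prod_congr rfl fun i hi ↦ hr i (mem_Icc.mp hi).1, prod_div_distrib, prod_const,
    Nat.card_Icc, add_tsub_cancel_right, ← prod_Icc_id_eq_factorial, Nat.cast_prod]

theorem Nat.cast_sub_one_mul_sub_two_nonneg (n : ℕ) : 0 ≤ ((n : ℝ) - 1) * (n - 2) := by
  rcases n with _ | _ | n
  · norm_num
  · norm_num
  · push_cast
    nlinarith

section Rates

variable (κ₀ κm1 κ₂ κm3 V : ℝ)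

noncomputable def birthRate (x : ℝ) : ℝ := κ₀ * V + (κ₂ / V) * x * (x - 1)

noncomputable def deathRate (x : ℝ) : ℝ := κm1 * x + (κm3 / V ^ 2) * x * (x - 1) * (x - 2)

@[simp] theorem birthRate_zero : birthRate κ₀ κ₂ V 0 = κ₀ * V := by simp [birthRate]

@[simp] theorem deathRate_one : deathRate κm1 κm3 V 1 = κm1 := by simp [deathRate]

variable {κ₀ κm1 κ₂ κm3 V}

theorem deathRate_natCast_pos (h₁ : 0 < κm1) (h₃ : 0 ≤ κm3) {n : ℕ} (hn : 1 ≤ n) :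
    0 < deathRate κm1 κm3 V n := by
  have hn' : (1 : ℝ) ≤ n := by exact_mod_cast hn
  have hcubic : 0 ≤ κm3 / V ^ 2 * (((n : ℝ) - 1) * (n - 2)) :=
    mul_nonneg (by positivity) (Nat.cast_sub_one_mul_sub_two_nonneg n)
  have : deathRate κm1 κm3 V n = n * (κm1 + κm3 / V ^ 2 * (((n : ℝ) - 1) * (n - 2))) := by
    unfold deathRate; ring
  rw [this]
  positivity

theorem birthRate_sub_one_mul_eq (hV : V ≠ 0) (x : ℝ) :
    κm3 * (birthRate κ₀ κ₂ V (x - 1) * x)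
      = κ₂ * V * deathRate κm1 κm3 V x + (κ₀ * κm3 - κ₂ * κm1) * V * x := by
  unfold birthRate deathRate
  field_simp
  ring

theorem birthRate_sub_one_div_deathRate (hκ : κ₀ * κm3 = κ₂ * κm1) (hV : V ≠ 0)
    (h₃ : κm3 ≠ 0) {x : ℝ} (hx : x ≠ 0) (hq : deathRate κm1 κm3 V x ≠ 0) :
    birthRate κ₀ κ₂ V (x - 1) / deathRate κm1 κm3 V x = V * (κ₂ / κm3) / x := by
  have h := birthRate_sub_one_mul_eq (κ₀ := κ₀) (κm1 := κm1) (κ₂ := κ₂) (κm3 := κm3) hV x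
  rw [hκ, sub_self, zero_mul, zero_mul, add_zero] at h
  rw [div_eq_div_iff hq hx]
  field_simp
  linear_combination h

end Rates

theorem stmt_12_general (κ₀ κm1 κ₂ κm3 : ℝ)
    (h₁ : 0 < κm1) (h₃ : 0 < κm3)
    (V : ℝ) (hV : 0 < V)
    (B : ℝ) (hB : B = κ₂ / κm3)
    (p q : ℕ → ℝ)
    (hp : ∀ i, p i = κ₀ * V + (κ₂ / V) * i * (i - 1))
    (hq : ∀ i, q i = κm1 * i + (κm3 / V ^ 2) * i * (i - 1) * (i - 2)) :
    (∀ x : ℕ, ∏ i ∈ Finset.Icc 1 x, p (i - 1) / q i = (V * B) ^ x / (Nat.factorial x))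
      ↔ κ₀ * κm3 = κ₂ * κm1 := by
  have hp : ∀ i : ℕ, p i = birthRate κ₀ κ₂ V i := hp
  have hq : ∀ i : ℕ, q i = deathRate κm1 κm3 V i := hq
  subst hB
  constructor
  · intro h
    have h1 := h 1
    simp only [Icc_self, prod_singleton, hp, hq, Nat.sub_self, Nat.cast_zero, Nat.cast_one,
      birthRate_zero, deathRate_one, pow_one, factorial_one, div_one] at h1
    field_simp at h1
    rw [h1, mul_comm]
  · intro hκ
    refine prod_Icc_eq_pow_div_factorial fun i hi ↦ ?_
    rw [hp, hq, Nat.cast_sub hi, Nat.cast_one]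
    exact birthRate_sub_one_div_deathRate hκ hV.ne' h₃.ne' (by positivity)
      (deathRate_natCast_pos h₁ h₃.le hi).ne'

/-- For the network `∅ ⇌ X, 2X ⇌ 3X`, the stationary distribution of the `V`-scaled
stochastic model is Poisson with parameter `VB` (with `B = κ₂/κm3`) if and only if
`P = R`, i.e. `κ₀κm3 = κ₂κm1`. -/
theorem stmt_12 (κ₀ κm1 κ₂ κm3 : ℝ)
    (h₀ : 0 < κ₀) (h₁ : 0 < κm1) (h₂ : 0 < κ₂) (h₃ : 0 < κm3)
    (V : ℝ) (hV : 0 < V)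
    (B : ℝ) (hB : B = κ₂ / κm3)
    (p q : ℕ → ℝ)
    (hp : ∀ i, p i = κ₀ * V + (κ₂ / V) * i * (i - 1))
    (hq : ∀ i, q i = κm1 * i + (κm3 / V ^ 2) * i * (i - 1) * (i - 2)) :
    (∀ x : ℕ, ∏ i ∈ Finset.Icc 1 x, p (i - 1) / q i = (V * B) ^ x / (Nat.factorial x))
      ↔ κ₀ * κm3 = κ₂ * κm1 :=
  stmt_12_general κ₀ κm1 κ₂ κm3 h₁ h₃ V hV B hB p q hp hq
end

section
/- Define g(x̃) = x̃(ln(x̃(x̃²+11)/(x̃²+1)) − ln 6 − 1) + 2√11·arctan(x̃/√11) − 2·arctan(x̃) − 2√11·arctan(1/√11) + 1 + π/2 for x̃ > 0. Then g'(x̃) = ln((x̃³ + 11x̃)/(6 + 6x̃²)), and consequently g'(x̃)·(6 − 11x̃ + 6x̃² − x̃³) ≤ 0 for all x̃ > 0 with equality exactly at x̃ ∈ {1, 2, 3}. Moreover g(1) = 0. -/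
/-!
With `f(x) = x (x² + 11) / (x² + 1)`, the derivative of `x (log f(x) - 1)` is
`log f(x) + 2x²/(x² + 11) - 2x²/(x² + 1)`, while the arctangent terms contribute
`22/(x² + 11) - 2/(x² + 1)`; the rational parts add up to `2 - 2 = 0`, so `g' = log (f / 6)`.
The sign condition is the monotonicity of `log`: `log (p / q)` and `q - p` have opposite signs and
vanish together exactly when `p = q`, i.e. at the roots `1, 2, 3` of `x³ - 6x² + 11x - 6`.
-/

open Real

noncomputable def logRatioPrimitive (a b u : ℝ) : ℝ :=
  u * (log (u * (u ^ 2 + a) / (u ^ 2 + b)) - 1)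
    + 2 * √a * arctan (u / √a) - 2 * √b * arctan (u / √b)

theorem hasDerivAt_mul_arctan_div (c : ℝ) {s : ℝ} (hs : s ≠ 0) (x : ℝ) :
    HasDerivAt (fun u => c * arctan (u / s)) (c * s / (s ^ 2 + x ^ 2)) x :=
  (((hasDerivAt_id' x).div_const s).arctan.const_mul c).congr_deriv (by field_simp)

theorem hasDerivAt_logRatioPrimitive {a b x : ℝ} (ha : 0 < a) (hb : 0 < b) (hx : 0 < x) :
    HasDerivAt (logRatioPrimitive a b) (log (x * (x ^ 2 + a) / (x ^ 2 + b))) x := by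
  have hxa : 0 < x ^ 2 + a := by positivity
  have hxb : 0 < x ^ 2 + b := by positivity
  have hsq : HasDerivAt (fun u : ℝ => u ^ 2) (2 * x) x := by
    simpa using hasDerivAt_pow 2 x
  have hratio := ((hasDerivAt_id' x).fun_mul (hsq.add_const a)).fun_div (hsq.add_const b) hxb.ne'
  have hlog := (hratio.log (div_pos (mul_pos hx hxa) hxb).ne').sub_const 1
  have harc_a := hasDerivAt_mul_arctan_div (2 * √a) (sqrt_pos.2 ha).ne' x
  have harc_b := hasDerivAt_mul_arctan_div (2 * √b) (sqrt_pos.2 hb).ne' x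
  refine ((((hasDerivAt_id' x).fun_mul hlog).fun_add harc_a).fun_sub harc_b).congr_deriv ?_
  rw [mul_assoc 2 √a, mul_assoc 2 √b, ← sq, ← sq, sq_sqrt ha.le, sq_sqrt hb.le]
  field_simp
  ring

theorem log_div_mul_sub_neg {p q : ℝ} (hp : 0 < p) (hq : 0 < q) (hpq : p ≠ q) :
    log (p / q) * (q - p) < 0 := by
  rcases hpq.lt_or_gt with h | h
  · exact mul_neg_of_neg_of_pos (log_neg (div_pos hp hq) ((div_lt_one hq).2 h)) (sub_pos.2 h)
  · exact mul_neg_of_pos_of_neg (log_pos ((one_lt_div hq).2 h)) (sub_neg.2 h)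

theorem log_div_mul_sub_nonpos {p q : ℝ} (hp : 0 < p) (hq : 0 < q) :
    log (p / q) * (q - p) ≤ 0 := by
  rcases eq_or_ne p q with rfl | hpq
  · simp
  · exact (log_div_mul_sub_neg hp hq hpq).le

theorem log_div_mul_sub_eq_zero_iff {p q : ℝ} (hp : 0 < p) (hq : 0 < q) :
    log (p / q) * (q - p) = 0 ↔ p = q := by
  refine ⟨fun h => by_contra fun hpq => (log_div_mul_sub_neg hp hq hpq).ne h, ?_⟩
  rintro rfl
  simp

theorem cube_add_eleven_mul_eq_iff (x : ℝ) :
    x ^ 3 + 11 * x = 6 + 6 * x ^ 2 ↔ x = 1 ∨ x = 2 ∨ x = 3 := by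
  rw [← sub_eq_zero, show x ^ 3 + 11 * x - (6 + 6 * x ^ 2) = (x - 1) * (x - 2) * (x - 3) by ring]
  simp only [mul_eq_zero, sub_eq_zero, or_assoc]

/-- The explicit scaling limit `g` of the non-equilibrium potential for the bistable network
`∅ ⇌ X, 2X ⇌ 3X` (rates 6, 11, 6, 1) satisfies `g'(x̃) = ln((x̃³+11x̃)/(6+6x̃²))`, hence
`g'(x̃)·(6 − 11x̃ + 6x̃² − x̃³) ≤ 0` for `x̃ > 0` with equality exactly at `x̃ ∈ {1,2,3}`,
and `g(1) = 0`. -/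
theorem stmt_14 (g : ℝ → ℝ)
    (hg : ∀ x : ℝ, g x =
      x * (Real.log (x * (x ^ 2 + 11) / (x ^ 2 + 1)) - Real.log 6 - 1)
        + 2 * Real.sqrt 11 * Real.arctan (x / Real.sqrt 11) - 2 * Real.arctan x
        - 2 * Real.sqrt 11 * Real.arctan (1 / Real.sqrt 11) + 1 + π / 2) :
    (∀ x : ℝ, 0 < x →
      HasDerivAt g (Real.log ((x ^ 3 + 11 * x) / (6 + 6 * x ^ 2))) x) ∧
    (∀ x : ℝ, 0 < x →
      Real.log ((x ^ 3 + 11 * x) / (6 + 6 * x ^ 2)) * (6 - 11 * x + 6 * x ^ 2 - x ^ 3) ≤ 0 ∧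
      (Real.log ((x ^ 3 + 11 * x) / (6 + 6 * x ^ 2)) * (6 - 11 * x + 6 * x ^ 2 - x ^ 3) = 0
        ↔ x = 1 ∨ x = 2 ∨ x = 3)) ∧
    g 1 = 0 := by
  have hg_eq : g = fun u => logRatioPrimitive 11 1 u - log 6 * u
      + (1 + π / 2 - 2 * √11 * arctan (1 / √11)) := by
    ext u
    rw [hg, logRatioPrimitive, sqrt_one, div_one]
    ring
  refine ⟨fun x hx => ?_, fun x hx => ?_, ?_⟩
  · rw [hg_eq]
    refine (((hasDerivAt_logRatioPrimitive (by norm_num : (0 : ℝ) < 11) one_pos hx).fun_sub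
      ((hasDerivAt_id' x).const_mul (log 6))).add_const _).congr_deriv ?_
    rw [mul_one, ← log_div (by positivity) (by norm_num)]
    congr 1
    field_simp
    ring
  · have hp : 0 < x ^ 3 + 11 * x := by positivity
    have hq : 0 < 6 + 6 * x ^ 2 := by positivity
    rw [show 6 - 11 * x + 6 * x ^ 2 - x ^ 3 = (6 + 6 * x ^ 2) - (x ^ 3 + 11 * x) by ring,
      log_div_mul_sub_eq_zero_iff hp hq, cube_add_eleven_mul_eq_iff]
    exact ⟨log_div_mul_sub_nonpos hp hq, Iff.rfl⟩
  · rw [hg]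
    norm_num [arctan_one]
    ring
end

section
/- Let a > 0 and define g(x̃) = ∫₀^{x̃} ln(√(1 + 2u/a) − 1) du − (ln 2)·x̃ for x̃ > 0. Then g'(x̃)·(2κ₂ − κ₁x̃) ≤ 0 for all x̃ > 0 where a = κ₂/(2κ₁), with equality if and only if x̃ = 4a; moreover g''(x̃) > 0 for all x̃ > 0. Hence g is a strictly convex Lyapunov function for the ODE ẋ = 2κ₂ − κ₁x at its unique equilibrium c = 4a = 2κ₂/κ₁. -/
/-!
By the fundamental theorem of calculus `g' x = log (√(1 + 2x/a) - 1) - log 2` on `(0, ∞)`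
(the integrand has only a logarithmic, hence integrable, singularity at `0`), and
differentiating once more gives `g'' > 0`. So `g'` is strictly increasing, and it vanishes at
`4a` because `√9 - 1 = 2`. Since `2κ₂ - κ₁x = κ₁(4a - x)`, the product `g'(x)(2κ₂ - κ₁x)` is
negative away from `4a`.
-/

open Real MeasureTheory Set Filter Topology

lemma Real.log_sqrt_one_add_sub_one {t : ℝ} (ht : 0 < t) :
    log (√(1 + t) - 1) = log t - log (√(1 + t) + 1) := by
  have hs : 1 < √(1 + t) := by
    rw [Real.lt_sqrt zero_le_one]; linarith
  have hprod : (√(1 + t) - 1) * (√(1 + t) + 1) = t := by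
    nlinarith [Real.sq_sqrt (show 0 ≤ 1 + t by linarith)]
  have := log_mul (x := √(1 + t) - 1) (y := √(1 + t) + 1) (by linarith) (by linarith)
  rw [hprod] at this
  linarith

lemma one_lt_sqrt_one_add_two_mul_div {a x : ℝ} (ha : 0 < a) (hx : 0 < x) :
    1 < √(1 + 2 * x / a) := by
  rw [Real.lt_sqrt zero_le_one]
  have : 0 < 2 * x / a := by positivity
  linarith

lemma intervalIntegrable_log_sqrt_one_add_two_mul_div_sub_one {a c : ℝ} (ha : 0 < a)
    (hc : 0 ≤ c) :
    IntervalIntegrable (fun u => log (√(1 + 2 * u / a) - 1)) volume 0 c := by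
  -- `(√(1 + t) - 1)(√(1 + t) + 1) = t` splits off the singularity at `0` as `log u`.
  have hsmooth : IntervalIntegrable (fun u => log (√(1 + 2 * u / a) + 1)) volume 0 c :=
    IntervalIntegrable.log (by fun_prop) fun u _ => by positivity
  refine ((intervalIntegral.intervalIntegrable_log'.add
    (intervalIntegrable_const (c := log 2 - log a))).sub hsmooth).congr_uIoo fun u hu => ?_
  rw [uIoo_of_le hc] at hu
  have hu0 : 0 < u := hu.1
  rw [log_sqrt_one_add_sub_one (by positivity), log_div (by positivity) ha.ne',
    log_mul two_ne_zero hu0.ne']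
  ring

noncomputable def potential (a x : ℝ) : ℝ :=
  (∫ u in (0 : ℝ)..x, log (√(1 + 2 * u / a) - 1)) - log 2 * x

variable {a x : ℝ}

lemma hasDerivAt_potential (ha : 0 < a) (hx : 0 < x) :
    HasDerivAt (potential a) (log (√(1 + 2 * x / a) - 1) - log 2) x := by
  have hcont : ContinuousAt (fun u => log (√(1 + 2 * u / a) - 1)) x :=
    (by fun_prop : Continuous fun u => √(1 + 2 * u / a) - 1).continuousAt.log
      (sub_pos.mpr (one_lt_sqrt_one_add_two_mul_div ha hx)).ne'
  have hmeas : StronglyMeasurableAtFilter (fun u => log (√(1 + 2 * u / a) - 1)) (𝓝 x) :=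
    (by fun_prop : Measurable fun u => log (√(1 + 2 * u / a) - 1)).stronglyMeasurable
      |>.stronglyMeasurableAtFilter
  exact (intervalIntegral.integral_hasDerivAt_right
    (intervalIntegrable_log_sqrt_one_add_two_mul_div_sub_one ha hx.le) hmeas hcont).sub
    (by simpa using (hasDerivAt_id x).const_mul (log 2))

lemma hasDerivAt_log_sqrt_one_add_two_mul_div_sub_one (ha : 0 < a) (hx : 0 < x) :
    HasDerivAt (fun y => log (√(1 + 2 * y / a) - 1))
      (1 / (a * √(1 + 2 * x / a) * (√(1 + 2 * x / a) - 1))) x := by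
  have hs := one_lt_sqrt_one_add_two_mul_div ha hx
  have hlin : HasDerivAt (fun y => 1 + 2 * y / a) (2 / a) x := by
    simpa using (((hasDerivAt_id x).const_mul 2).div_const a).const_add 1
  convert ((hlin.sqrt (by positivity)).sub_const 1).log (by linarith) using 1
  field_simp

lemma hasDerivAt_deriv_potential (ha : 0 < a) (hx : 0 < x) :
    HasDerivAt (deriv (potential a))
      (1 / (a * √(1 + 2 * x / a) * (√(1 + 2 * x / a) - 1))) x := by
  have hderiv : deriv (potential a) =ᶠ[𝓝 x] fun y => log (√(1 + 2 * y / a) - 1) - log 2 := by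
    filter_upwards [Ioi_mem_nhds hx] with y hy using (hasDerivAt_potential ha hy).deriv
  exact ((hasDerivAt_log_sqrt_one_add_two_mul_div_sub_one ha hx).sub_const _)
    |>.congr_of_eventuallyEq hderiv

lemma deriv_deriv_potential_pos (ha : 0 < a) (hx : 0 < x) :
    0 < deriv (deriv (potential a)) x := by
  rw [(hasDerivAt_deriv_potential ha hx).deriv]
  have := one_lt_sqrt_one_add_two_mul_div ha hx
  have : 0 < √(1 + 2 * x / a) - 1 := by linarith
  positivity

lemma strictMonoOn_deriv_potential (ha : 0 < a) : StrictMonoOn (deriv (potential a)) (Ioi 0) :=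
  strictMonoOn_of_deriv_pos (convex_Ioi 0)
    (fun _ hx => (hasDerivAt_deriv_potential ha hx).continuousAt.continuousWithinAt)
    (fun _ hx => deriv_deriv_potential_pos ha (interior_Ioi.subset hx))

lemma deriv_potential_four_mul (ha : 0 < a) : deriv (potential a) (4 * a) = 0 := by
  have h9 : 1 + 2 * (4 * a) / a = 3 ^ 2 := by field_simp; norm_num
  rw [(hasDerivAt_potential ha (by positivity)).deriv, h9, sqrt_sq (by norm_num)]
  norm_num

lemma StrictMonoOn.mul_mul_sub_nonpos {f : ℝ → ℝ} {s : Set ℝ} {c k x : ℝ}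
    (hf : StrictMonoOn f s) (hc : c ∈ s) (hfc : f c = 0) (hk : 0 < k) (hx : x ∈ s) :
    f x * (k * (c - x)) ≤ 0 ∧ (f x * (k * (c - x)) = 0 ↔ x = c) := by
  rcases lt_trichotomy x c with hlt | rfl | hgt
  · have : f x * (k * (c - x)) < 0 :=
      mul_neg_of_neg_of_pos (hfc ▸ hf hx hc hlt) (by nlinarith)
    exact ⟨this.le, by simp [this.ne, hlt.ne]⟩
  · simp [hfc]
  · have : f x * (k * (c - x)) < 0 :=
      mul_neg_of_pos_of_neg (hfc ▸ hf hc hx hgt) (by nlinarith)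
    exact ⟨this.le, by simp [this.ne, hgt.ne']⟩

/-- The limiting non-equilibrium potential `g(x̃) = ∫₀^{x̃} ln(√(1+2u/a) − 1) du − (ln 2)x̃`
with `a = κ₂/(2κ₁)` is a strictly convex Lyapunov function for `ẋ = 2κ₂ − κ₁x` at its
unique equilibrium `4a = 2κ₂/κ₁`: `g'(x̃)(2κ₂ − κ₁x̃) ≤ 0` with equality iff `x̃ = 4a`,
and `g''(x̃) > 0` for all `x̃ > 0`. -/
theorem stmt_17 (κ1 κ2 a : ℝ) (hκ1 : 0 < κ1) (hκ2 : 0 < κ2) (ha : a = κ2 / (2 * κ1))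
    (g : ℝ → ℝ)
    (hg : ∀ x : ℝ, g x =
      (∫ u in (0 : ℝ)..x, Real.log (Real.sqrt (1 + 2 * u / a) - 1)) - Real.log 2 * x) :
    (∀ x : ℝ, 0 < x →
      (deriv g x * (2 * κ2 - κ1 * x) ≤ 0 ∧
        (deriv g x * (2 * κ2 - κ1 * x) = 0 ↔ x = 4 * a))) ∧
    ∀ x : ℝ, 0 < x → 0 < deriv (deriv g) x := by
  obtain rfl : g = potential a := funext hg
  have ha0 : 0 < a := by rw [ha]; positivity
  have hflow : ∀ x, 2 * κ2 - κ1 * x = κ1 * (4 * a - x) := fun x => by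
    rw [ha]; field_simp; ring
  refine ⟨fun x hx => ?_, fun x hx => deriv_deriv_potential_pos ha0 hx⟩
  rw [hflow]
  exact (strictMonoOn_deriv_potential ha0).mul_mul_sub_nonpos (mem_Ioi.mpr (by positivity))
    (deriv_potential_four_mul ha0) hκ1 hx
end

section
/- If n_V is a sequence of positive integers with n_V/V → x̃ > 0 as V → ∞ and c > 0, then (1/V)[Vc − n_V ln V − n_V ln c + ln(n_V!)] → x̃(ln x̃ − ln c − 1) + c as V → ∞. -/
open Filter Real

/-- One-dimensional Stirling limit: if `n_V/V → x̃ > 0` and `c > 0`, then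
`(1/V)[Vc − n_V ln V − n_V ln c + ln(n_V!)] → x̃(ln x̃ − ln c − 1) + c`. -/
theorem stmt_18 (n : ℕ → ℕ) (hn : ∀ V, 0 < n V) (xt c : ℝ) (hxt : 0 < xt) (hc : 0 < c)
    (h : Tendsto (fun V : ℕ => (n V : ℝ) / V) atTop (nhds xt)) :
    Tendsto
      (fun V : ℕ => (1 / (V : ℝ)) *
        ((V : ℝ) * c - (n V : ℝ) * Real.log V - (n V : ℝ) * Real.log c
          + Real.log (Nat.factorial (n V))))
      atTop (nhds (xt * (Real.log xt - Real.log c - 1) + c)) := by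
  -- n V → ∞
  have hnat : Tendsto n atTop atTop := by
    rw [← tendsto_natCast_atTop_iff (R := ℝ)]
    have h1 : Tendsto (fun V : ℕ => (xt / 2) * V) atTop atTop :=
      (tendsto_natCast_atTop_atTop).const_mul_atTop (by positivity)
    apply tendsto_atTop_mono' _ _ h1
    have h2 : ∀ᶠ V : ℕ in atTop, xt / 2 < (n V : ℝ) / V :=
      h.eventually (eventually_gt_nhds (by linarith))
    filter_upwards [h2, eventually_gt_atTop 0] with V hV hV0
    have hV0' : (0 : ℝ) < V := by exact_mod_cast hV0
    rw [div_lt_div_iff₀ (by positivity) hV0'] at hV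
    nlinarith
  -- auxiliary limits
  have hinv : Tendsto (fun V : ℕ => 1 / (V : ℝ)) atTop (nhds 0) :=
    tendsto_one_div_atTop_nhds_zero_nat
  have hst : Tendsto (fun V : ℕ => (1 / (V : ℝ)) * Real.log (Stirling.stirlingSeq (n V)))
      atTop (nhds 0) := by
    have := ((Real.continuousAt_log (by positivity : Real.sqrt Real.pi ≠ 0)).tendsto.comp
      (Stirling.tendsto_stirlingSeq_sqrt_pi.comp hnat))
    simpa using hinv.mul this
  have hlog2 : Tendsto (fun V : ℕ => (1 / (V : ℝ)) * (1 / 2 * Real.log (2 * (n V : ℝ))))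
      atTop (nhds 0) := by
    have hln : Tendsto (fun V : ℕ => Real.log (n V) / (n V : ℝ)) atTop (nhds 0) :=
      Real.isLittleO_log_id_atTop.tendsto_div_nhds_zero.comp
        ((tendsto_natCast_atTop_iff (R := ℝ)).mpr hnat)
    have hmain : Tendsto (fun V : ℕ => Real.log (n V) / (V : ℝ)) atTop (nhds 0) := by
      have := hln.mul h
      rw [zero_mul] at this
      apply this.congr'
      filter_upwards [eventually_gt_atTop 0] with V hV
      have hnV : ((n V : ℝ)) ≠ 0 := by exact_mod_cast (hn V).ne'
      field_simp
    have : Tendsto (fun V : ℕ => 1 / 2 * ((1 / (V : ℝ)) * Real.log 2 + Real.log (n V) / V))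
        atTop (nhds (1 / 2 * (0 * Real.log 2 + 0))) :=
      ((hinv.mul_const _).add hmain).const_mul _
    simp only [zero_mul, add_zero, mul_zero] at this
    apply this.congr'
    filter_upwards [eventually_gt_atTop 0] with V hV
    have hnV : (0 : ℝ) < (n V : ℝ) := by exact_mod_cast hn V
    rw [Real.log_mul (by norm_num) hnV.ne']
    ring
  have hlogx : Tendsto (fun V : ℕ => ((n V : ℝ) / V) * Real.log ((n V : ℝ) / V))
      atTop (nhds (xt * Real.log xt)) :=
    h.mul (((Real.continuousAt_log hxt.ne').tendsto).comp h)
  have hmlc : Tendsto (fun V : ℕ => ((n V : ℝ) / V) * Real.log c) atTop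
      (nhds (xt * Real.log c)) := h.mul_const _
  -- combine
  have hfinal : Tendsto (fun V : ℕ =>
      c - ((n V : ℝ) / V) * Real.log c + ((n V : ℝ) / V) * Real.log ((n V : ℝ) / V)
        - (n V : ℝ) / V + (1 / (V : ℝ)) * Real.log (Stirling.stirlingSeq (n V))
        + (1 / (V : ℝ)) * (1 / 2 * Real.log (2 * (n V : ℝ))))
      atTop (nhds (c - xt * Real.log c + xt * Real.log xt - xt + 0 + 0)) :=
    (((((tendsto_const_nhds.sub hmlc).add hlogx).sub h).add hst).add hlog2)
  have : xt * (Real.log xt - Real.log c - 1) + c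
      = c - xt * Real.log c + xt * Real.log xt - xt + 0 + 0 := by ring
  rw [this]
  apply hfinal.congr'
  filter_upwards [eventually_gt_atTop 0] with V hV
  have hV0 : (0 : ℝ) < V := by exact_mod_cast hV
  have hnV : (0 : ℝ) < (n V : ℝ) := by exact_mod_cast hn V
  have key := Stirling.log_stirlingSeq_formula (n V)
  have hfact : Real.log (Nat.factorial (n V))
      = Real.log (Stirling.stirlingSeq (n V)) + 1 / 2 * Real.log (2 * (n V : ℝ))
        + (n V : ℝ) * (Real.log (n V) - 1) := by
    rw [Real.log_div hnV.ne' (Real.exp_ne_zero 1), Real.log_exp] at key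
    push_cast at key ⊢
    linarith
  rw [hfact, Real.log_div hnV.ne' hV0.ne']
  field_simp
  ring
end
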